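/- Let W be a complex matrix on ℂ^m ⊗ (ℂ^d)^{⊗(k+1)} satisfying (I_m ⊗ Π⁺_{k+1}) W (I_m ⊗ Π⁺_{k+1}) = W, where Π⁺_{k+1} acts on the last k+1 tensor factors. Then the partial trace of W over the last tensor factor, a matrix W' on ℂ^m ⊗ (ℂ^d)^{⊗k}, satisfies (I_m ⊗ Π⁺_k) W' (I_m ⊗ Π⁺_k) = W'. -/

import Mathlib

open Matrix Filter
open scoped Kronecker ComplexOrder

noncomputable section

/-- The positive semidefinite square root of a matrix, extended by `0` to all matrices. -/
noncomputable def msqrt {n : Type*} [Fintype n] [DecidableEq n] (A : Matrix n n ℂ) :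
    Matrix n n ℂ :=
  open scoped Classical in
  if h : A.PosSemidef then h.1.eigenvectorUnitary.1 *
    diagonal ((↑) ∘ Real.sqrt ∘ h.1.eigenvalues) * (star h.1.eigenvectorUnitary : Matrix n n ℂ)
    else 0

/-- A density matrix: positive semidefinite with trace one. -/
def IsDensityMatrix {n : Type*} [Fintype n] [DecidableEq n] (ρ : Matrix n n ℂ) : Prop :=
  ρ.PosSemidef ∧ ρ.trace = 1

/-- The fidelity `F(ρ,σ) = Tr √(√ρ σ √ρ)` of two (density) matrices. -/
noncomputable def Fid {n : Type*} [Fintype n] [DecidableEq n] (ρ σ : Matrix n n ℂ) : ℝ :=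
  ((msqrt (msqrt ρ * σ * msqrt ρ)).trace).re

/-- The trace distance `Δ(ρ,σ) = (1/2) Tr √((ρ-σ)† (ρ-σ))`. -/
noncomputable def trDist {n : Type*} [Fintype n] [DecidableEq n] (ρ σ : Matrix n n ℂ) : ℝ :=
  (1 / 2) * ((msqrt ((ρ - σ)ᴴ * (ρ - σ))).trace).re

/-- A quantum channel: a linear map admitting a Kraus representation. -/
def IsQuantumChannel {m n : Type*} [Fintype m] [Fintype n] [DecidableEq m] [DecidableEq n]
    (Λ : Matrix m m ℂ →ₗ[ℂ] Matrix n n ℂ) : Prop :=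
  ∃ (N : ℕ) (K : Fin N → Matrix n m ℂ),
    (∀ X, Λ X = ∑ i, K i * X * (K i)ᴴ) ∧ (∑ i, (K i)ᴴ * K i = 1)

/-- The permutation matrix `P_π` on `(ℂ^d)^{⊗k}`. -/
def permMat (d k : ℕ) (π : Equiv.Perm (Fin k)) :
    Matrix (Fin k → Fin d) (Fin k → Fin d) ℂ :=
  Matrix.of fun f g => if f = g ∘ π then 1 else 0

/-- The orthogonal projector `Π⁺_k` onto the symmetric subspace of `(ℂ^d)^{⊗k}`. -/
noncomputable def symProj (d k : ℕ) : Matrix (Fin k → Fin d) (Fin k → Fin d) ℂ :=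
  ((k.factorial : ℂ))⁻¹ • ∑ π : Equiv.Perm (Fin k), permMat d k π

/-- Combine a value for the first tensor factor with values for the remaining factors. -/
def extendFirst {d k : ℕ} (a : Fin d) (h : {i : Fin k // (i : ℕ) ≠ 0} → Fin d) :
    Fin k → Fin d :=
  fun i => if hi : (i : ℕ) = 0 then a else h ⟨i, hi⟩

/-- The partial trace over the tensor factors `2,…,k` of a matrix on `(ℂ^d)^{⊗k}`. -/
noncomputable def ptrRest {d k : ℕ}
    (W : Matrix (Fin k → Fin d) (Fin k → Fin d) ℂ) : Matrix (Fin d) (Fin d) ℂ :=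
  Matrix.of fun a a' =>
    ∑ h : {i : Fin k // (i : ℕ) ≠ 0} → Fin d, W (extendFirst a h) (extendFirst a' h)

/-- A `k`-Bose-symmetric extendible channel on `d×d` matrices. -/
def IsBoseSymExtendible (d k : ℕ)
    (Λ : Matrix (Fin d) (Fin d) ℂ →ₗ[ℂ] Matrix (Fin d) (Fin d) ℂ) : Prop :=
  ∃ V : Matrix (Fin d) (Fin d) ℂ →ₗ[ℂ] Matrix (Fin k → Fin d) (Fin k → Fin d) ℂ,
    IsQuantumChannel V ∧ (∀ X, symProj d k * V X * symProj d k = V X) ∧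
    (∀ X, Λ X = ptrRest (V X))

/-- An entanglement-breaking (measure-and-prepare) channel on `d×d` matrices. -/
def IsEBChannel (d : ℕ)
    (Λ : Matrix (Fin d) (Fin d) ℂ →ₗ[ℂ] Matrix (Fin d) (Fin d) ℂ) : Prop :=
  ∃ (N : ℕ) (M : Fin N → Matrix (Fin d) (Fin d) ℂ) (β : Fin N → (Fin d → ℂ)),
    (∀ y, (M y).PosSemidef) ∧ (∑ y, M y = 1) ∧ (∀ y, star (β y) ⬝ᵥ β y = 1) ∧
    (∀ X, Λ X = ∑ y, ((M y * X).trace) • vecMulVec (β y) (star (β y)))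

/-- `(id_A ⊗ Λ)[ρ]`: a map acting on the `B` tensor factor of a bipartite matrix. -/
noncomputable def idTensor {dA dB dB' : ℕ}
    (Λ : Matrix (Fin dB) (Fin dB) ℂ →ₗ[ℂ] Matrix (Fin dB') (Fin dB') ℂ)
    (ρ : Matrix (Fin dA × Fin dB) (Fin dA × Fin dB) ℂ) :
    Matrix (Fin dA × Fin dB') (Fin dA × Fin dB') ℂ :=
  Matrix.of fun p q => Λ (Matrix.of fun b b' => ρ (p.1, b) (q.1, b')) p.2 q.2

/-- `(Γ ⊗ id_B)[ρ]`: a map acting on the `A` tensor factor of a bipartite matrix. -/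
noncomputable def tensorId {dA dA' dB : ℕ}
    (Γ : Matrix (Fin dA) (Fin dA) ℂ →ₗ[ℂ] Matrix (Fin dA') (Fin dA') ℂ)
    (ρ : Matrix (Fin dA × Fin dB) (Fin dA × Fin dB) ℂ) :
    Matrix (Fin dA' × Fin dB) (Fin dA' × Fin dB) ℂ :=
  Matrix.of fun p q => Γ (Matrix.of fun a a' => ρ (a, p.2) (a', q.2)) p.1 q.1

/-- Supremum of `F(ρ, (id ⊗ Λ)[ρ])` over `k`-Bose-symmetric extendible channels `Λ`. -/
noncomputable def symSup (dA dB k : ℕ)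
    (ρ : Matrix (Fin dA × Fin dB) (Fin dA × Fin dB) ℂ) : ℝ :=
  sSup {x : ℝ | ∃ Λ, IsBoseSymExtendible dB k Λ ∧ x = Fid ρ (idTensor Λ ρ)}

/-- Supremum of `F(ρ, (id ⊗ Λ)[ρ])` over entanglement-breaking channels `Λ`. -/
noncomputable def ebSup (dA dB : ℕ)
    (ρ : Matrix (Fin dA × Fin dB) (Fin dA × Fin dB) ℂ) : ℝ :=
  sSup {x : ℝ | ∃ Λ, IsEBChannel dB Λ ∧ x = Fid ρ (idTensor Λ ρ)}

/-- A quantum-classical bipartite state. -/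
def IsQuantumClassical {dA dB : ℕ}
    (ρ : Matrix (Fin dA × Fin dB) (Fin dA × Fin dB) ℂ) : Prop :=
  ∃ (N : ℕ) (p : Fin N → ℝ) (σ : Fin N → Matrix (Fin dA) (Fin dA) ℂ)
    (b : Fin N → (Fin dB → ℂ)),
    (∀ i, 0 ≤ p i) ∧ (∑ i, p i = 1) ∧ (∀ i, IsDensityMatrix (σ i)) ∧
    (∀ i j, star (b i) ⬝ᵥ b j = if i = j then 1 else 0) ∧
    ρ = ∑ i, (p i : ℂ) • (σ i ⊗ₖ vecMulVec (b i) (star (b i)))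

/-- The Choi matrix `J(Λ) = ∑_{x,x'} |x⟩⟨x'| ⊗ Λ(|x⟩⟨x'|)`. -/
noncomputable def choiMatrix {d : ℕ} {Y : Type*} [Fintype Y] [DecidableEq Y]
    (Λ : Matrix (Fin d) (Fin d) ℂ →ₗ[ℂ] Matrix Y Y ℂ) :
    Matrix (Fin d × Y) (Fin d × Y) ℂ :=
  Matrix.of fun p q => Λ (Matrix.single p.1 q.1 1) p.2 q.2

/-- A `k`-Bose-symmetric extension (on the output system) of a matrix on `ℂ^d ⊗ ℂ^d`. -/
def HasBoseSymExtension {d : ℕ} (k : ℕ)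
    (W : Matrix (Fin d × Fin d) (Fin d × Fin d) ℂ) : Prop :=
  ∃ Wt : Matrix (Fin d × (Fin k → Fin d)) (Fin d × (Fin k → Fin d)) ℂ,
    Wt.PosSemidef ∧
    ((1 : Matrix (Fin d) (Fin d) ℂ) ⊗ₖ symProj d k) * Wt *
        ((1 : Matrix (Fin d) (Fin d) ℂ) ⊗ₖ symProj d k) = Wt ∧
    (∀ x x' b b', W (x, b) (x', b') =
      ∑ h : {i : Fin k // (i : ℕ) ≠ 0} → Fin d,
        Wt (x, extendFirst b h) (x', extendFirst b' h))

/-- The `k`-fold tensor power of a vector in `ℂ^d`. -/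
def vecPow {d : ℕ} (k : ℕ) (v : Fin d → ℂ) : (Fin k → Fin d) → ℂ :=
  fun f => ∏ i, v (f i)

end

noncomputable section StmtFiveAux

lemma permMat_mul_permMat (d n : ℕ) (π σ : Equiv.Perm (Fin n)) :
    permMat d n π * permMat d n σ = permMat d n (π.trans σ) := by
  ext f g
  simp only [permMat, Matrix.mul_apply, Matrix.of_apply, mul_ite, mul_one, mul_zero]
  rw [Finset.sum_ite_eq' _ (g ∘ σ) (fun h => if f = h ∘ π then (1:ℂ) else 0)]
  simp only [Finset.mem_univ, if_true]
  rfl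

lemma symProj_mul_permMat (d n : ℕ) (τ : Equiv.Perm (Fin n)) :
    symProj d n * permMat d n τ = symProj d n := by
  simp only [symProj, Matrix.smul_mul, Matrix.sum_mul, permMat_mul_permMat]
  congr 1
  have : ∀ π : Equiv.Perm (Fin n), π.trans τ = τ * π := fun _ => rfl
  simp_rw [this]
  exact Equiv.sum_comp (Equiv.mulLeft τ) (permMat d n)

lemma permMat_mul_symProj (d n : ℕ) (τ : Equiv.Perm (Fin n)) :
    permMat d n τ * symProj d n = symProj d n := by
  simp only [symProj, Matrix.mul_smul, Matrix.mul_sum, permMat_mul_permMat]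
  congr 1
  have : ∀ π : Equiv.Perm (Fin n), τ.trans π = π * τ := fun _ => rfl
  simp_rw [this]
  exact Equiv.sum_comp (Equiv.mulRight τ) (permMat d n)

def embedPerm (k : ℕ) (π : Equiv.Perm (Fin k)) : Equiv.Perm (Fin (k + 1)) where
  toFun i := Fin.lastCases (Fin.last k) (fun j => (π j).castSucc) i
  invFun i := Fin.lastCases (Fin.last k) (fun j => (π.symm j).castSucc) i
  left_inv i := by
    induction i using Fin.lastCases <;> simp
  right_inv i := by
    induction i using Fin.lastCases <;> simp

lemma comp_embedPerm {d k : ℕ} (π : Equiv.Perm (Fin k)) (g : Fin (k+1) → Fin d) :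
    g ∘ (embedPerm k π) = Fin.snoc ((Fin.init g) ∘ π) (g (Fin.last k)) := by
  funext i
  induction i using Fin.lastCases with
  | last => simp [embedPerm]
  | cast j => simp [embedPerm, Fin.init]

lemma permMat_embedPerm {d k : ℕ} (π : Equiv.Perm (Fin k)) (f g : Fin (k+1) → Fin d) :
    permMat d (k+1) (embedPerm k π) f g =
      permMat d k π (Fin.init f) (Fin.init g) *
        (if f (Fin.last k) = g (Fin.last k) then 1 else 0) := by
  simp only [permMat, Matrix.of_apply, comp_embedPerm, ite_mul, one_mul, zero_mul]
  by_cases h : f = Fin.snoc (Fin.init g ∘ π) (g (Fin.last k))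
  · subst h
    simp [Fin.init_snoc, Fin.snoc_last]
  · rw [if_neg h]
    by_cases h1 : Fin.init f = Fin.init g ∘ π
    · rw [if_pos h1, if_neg]
      intro h2
      exact h (by rw [← h1, ← h2]; exact (Fin.snoc_init_self f).symm)
    · rw [if_neg h1]

def Qm (d k : ℕ) : Matrix (Fin (k+1) → Fin d) (Fin (k+1) → Fin d) ℂ :=
  Matrix.of fun f g => symProj d k (Fin.init f) (Fin.init g) *
    (if f (Fin.last k) = g (Fin.last k) then 1 else 0)

lemma Qm_eq (d k : ℕ) :
    Qm d k = ((k.factorial : ℂ))⁻¹ • ∑ π : Equiv.Perm (Fin k), permMat d (k+1) (embedPerm k π) := by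
  ext f g
  simp only [Qm, Matrix.of_apply, symProj, Matrix.smul_apply, Matrix.sum_apply,
    permMat_embedPerm, smul_eq_mul]
  rw [mul_assoc]
  congr 1
  rw [Finset.sum_mul]

lemma symProj_mul_Qm (d k : ℕ) : symProj d (k+1) * Qm d k = symProj d (k+1) := by
  rw [Qm_eq, Matrix.mul_smul, Matrix.mul_sum]
  simp only [symProj_mul_permMat]
  rw [Finset.sum_const, Finset.card_univ, Fintype.card_perm, Fintype.card_fin]
  rw [← Nat.cast_smul_eq_nsmul ℂ, smul_smul]
  rw [inv_mul_cancel₀ (by exact_mod_cast Nat.factorial_ne_zero k), one_smul]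

lemma Qm_mul_symProj (d k : ℕ) : Qm d k * symProj d (k+1) = symProj d (k+1) := by
  rw [Qm_eq, Matrix.smul_mul, Matrix.sum_mul]
  simp only [permMat_mul_symProj]
  rw [Finset.sum_const, Finset.card_univ, Fintype.card_perm, Fintype.card_fin]
  rw [← Nat.cast_smul_eq_nsmul ℂ, smul_smul]
  rw [inv_mul_cancel₀ (by exact_mod_cast Nat.factorial_ne_zero k), one_smul]

lemma one_kron_mul_apply {m : ℕ} {n : Type*} [Fintype n] [DecidableEq n]
    (B : Matrix n n ℂ) (X : Matrix (Fin m × n) (Fin m × n) ℂ)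
    (a : Fin m) (f : n) (q : Fin m × n) :
    (((1 : Matrix (Fin m) (Fin m) ℂ) ⊗ₖ B) * X) (a, f) q =
      ∑ h : n, B f h * X (a, h) q := by
  simp [Matrix.mul_apply, Fintype.sum_prod_type, Matrix.one_apply, ite_mul, zero_mul,
    one_mul, Finset.sum_ite_irrel, Finset.sum_ite_eq, Finset.sum_const_zero]

lemma mul_one_kron_apply {m : ℕ} {n : Type*} [Fintype n] [DecidableEq n]
    (B : Matrix n n ℂ) (X : Matrix (Fin m × n) (Fin m × n) ℂ)
    (p : Fin m × n) (c : Fin m) (g : n) :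
    (X * ((1 : Matrix (Fin m) (Fin m) ℂ) ⊗ₖ B)) p (c, g) =
      ∑ h : n, X p (c, h) * B h g := by
  simp [Matrix.mul_apply, Fintype.sum_prod_type, Matrix.one_apply, ite_mul, mul_ite,
    zero_mul, mul_zero, one_mul, mul_one, Finset.sum_ite_irrel, Finset.sum_ite_eq',
    Finset.sum_const_zero]

lemma stmt5_key {m d k : ℕ}
    (W : Matrix (Fin m × (Fin (k + 1) → Fin d)) (Fin m × (Fin (k + 1) → Fin d)) ℂ)
    (W' : Matrix (Fin m × (Fin k → Fin d)) (Fin m × (Fin k → Fin d)) ℂ)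
    (hW' : ∀ a a' f f', W' (a, f) (a', f') =
        ∑ b : Fin d, W (a, Fin.snoc f b) (a', Fin.snoc f' b))
    (a a' : Fin m) (f f' : Fin k → Fin d) :
    (((1 : Matrix (Fin m) (Fin m) ℂ) ⊗ₖ symProj d k) * W' *
        ((1 : Matrix (Fin m) (Fin m) ℂ) ⊗ₖ symProj d k)) (a, f) (a', f') =
    ∑ b : Fin d, (((1 : Matrix (Fin m) (Fin m) ℂ) ⊗ₖ Qm d k) * W *
        ((1 : Matrix (Fin m) (Fin m) ℂ) ⊗ₖ Qm d k)) (a, Fin.snoc f b) (a', Fin.snoc f' b) := by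
  have re : ∀ F : (Fin (k+1) → Fin d) → ℂ,
      ∑ g : Fin (k+1) → Fin d, F g = ∑ p : Fin d × (Fin k → Fin d), F (Fin.snoc p.2 p.1) := by
    intro F
    rw [← Equiv.sum_comp (Fin.snocEquiv (fun _ => Fin d))]
    rfl
  simp only [mul_one_kron_apply, one_kron_mul_apply, hW']
  simp only [Qm, Matrix.of_apply, Fin.init_snoc, Fin.snoc_last]
  simp_rw [re]
  simp only [Fintype.sum_prod_type, Fin.init_snoc, Fin.snoc_last, ite_mul, mul_ite,
    zero_mul, mul_zero, one_mul, mul_one, Finset.sum_ite_irrel, Finset.sum_ite_eq,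
    Finset.sum_ite_eq', Finset.mem_univ, if_true, Finset.sum_const_zero,
    Finset.sum_mul, Finset.mul_sum]
  exact (Finset.sum_congr rfl fun x _ => Finset.sum_comm).trans Finset.sum_comm

end StmtFiveAux

/-- The partial trace over the last tensor factor of a Bose-symmetric matrix
on `ℂ^m ⊗ (ℂ^d)^{⊗(k+1)}` is Bose-symmetric on `ℂ^m ⊗ (ℂ^d)^{⊗k}`. -/
theorem stmt5 {m d k : ℕ}
    (W : Matrix (Fin m × (Fin (k + 1) → Fin d)) (Fin m × (Fin (k + 1) → Fin d)) ℂ)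
    (hW : ((1 : Matrix (Fin m) (Fin m) ℂ) ⊗ₖ symProj d (k + 1)) * W *
        ((1 : Matrix (Fin m) (Fin m) ℂ) ⊗ₖ symProj d (k + 1)) = W)
    (W' : Matrix (Fin m × (Fin k → Fin d)) (Fin m × (Fin k → Fin d)) ℂ)
    (hW' : ∀ a a' f f', W' (a, f) (a', f') =
        ∑ b : Fin d, W (a, Fin.snoc f b) (a', Fin.snoc f' b)) :
    ((1 : Matrix (Fin m) (Fin m) ℂ) ⊗ₖ symProj d k) * W' *
        ((1 : Matrix (Fin m) (Fin m) ℂ) ⊗ₖ symProj d k) = W' := by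
  have h1 : ((1 : Matrix (Fin m) (Fin m) ℂ) ⊗ₖ Qm d k) *
      ((1 : Matrix (Fin m) (Fin m) ℂ) ⊗ₖ symProj d (k+1)) =
      (1 : Matrix (Fin m) (Fin m) ℂ) ⊗ₖ symProj d (k+1) := by
    rw [← Matrix.mul_kronecker_mul, one_mul, Qm_mul_symProj]
  have h2 : ((1 : Matrix (Fin m) (Fin m) ℂ) ⊗ₖ symProj d (k+1)) *
      ((1 : Matrix (Fin m) (Fin m) ℂ) ⊗ₖ Qm d k) =
      (1 : Matrix (Fin m) (Fin m) ℂ) ⊗ₖ symProj d (k+1) := by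
    rw [← Matrix.mul_kronecker_mul, one_mul, symProj_mul_Qm]
  have hWQ : ((1 : Matrix (Fin m) (Fin m) ℂ) ⊗ₖ Qm d k) * W *
      ((1 : Matrix (Fin m) (Fin m) ℂ) ⊗ₖ Qm d k) = W := by
    conv_lhs => rw [← hW]
    rw [← Matrix.mul_assoc, ← Matrix.mul_assoc, h1, Matrix.mul_assoc, Matrix.mul_assoc, h2,
      ← Matrix.mul_assoc, hW]
  ext ⟨a, f⟩ ⟨a', f'⟩
  rw [stmt5_key W W' hW' a a' f f', hW' a a' f f']
  simp_rw [hWQ]
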